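/- arXiv:1807.05426 — 3 statements merged into one kernel-verified Lean document; each statement's English description precedes it below -/
import Mathlib

section
/- Let T* > 0, a ≠ 0, k ∈ ℝ, and define v as in the explicit axisymmetric solution: v₁ = a x₁/(T*-t) + k x₂ r^{-(2+1/a)}/(T*-t), v₂ = a x₂/(T*-t) - k x₁ r^{-(2+1/a)}/(T*-t), v₃ = -2a x₃/(T*-t), with r = √(x₁²+x₂²). Then there exists a pressure P(t,x) (e.g. an explicit quadratic-plus-radial function) such that ∂ₜv + (v·∇)v = -∇P holds pointwise for r > 0 and 0 ≤ t < T*. -/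
/-!
Write `τ = T - t`, `ρ = x₁² + x₂² = r²`, `β = 2 + 1/a` and `S = ρ^(-β/2) = r^(-β)`, so that the
horizontal velocity is `(a x + k S x^⊥)/τ` with `x^⊥ = (x₂, -x₁)`. Since `ρ ∂_ρ S = -(β/2) S`, its
material derivative is `((a + a²) - k² S²) x / τ² + k (1 + 2a - aβ) S x^⊥ / τ²`, and the swirl term
vanishes because `aβ = 2a + 1`. The radial term is `-∇` of `(-(a + a²) ρ/2 + (k²/2) Φ(ρ)) / τ²` with
`Φ' = ρ^(-β)` (a logarithm when `a = -1`), and the vertical strain `-2a x₃/τ` adds `(a - 2a²) x₃²/τ²`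
to the pressure. The reflection `x₁ ↔ x₂`, `k ↦ -k` exchanges the two horizontal components, so the
second horizontal equation is the first one in disguise.
-/

/-- First Cartesian component of the explicit axisymmetric Euler solution. -/
noncomputable def V1 (T a k t x1 x2 x3 : ℝ) : ℝ :=
  a * x1 / (T - t) + k * x2 / ((Real.sqrt (x1 ^ 2 + x2 ^ 2)) ^ ((2 : ℝ) + 1 / a) * (T - t))

/-- Second Cartesian component of the explicit axisymmetric Euler solution. -/
noncomputable def V2 (T a k t x1 x2 x3 : ℝ) : ℝ :=
  a * x2 / (T - t) - k * x1 / ((Real.sqrt (x1 ^ 2 + x2 ^ 2)) ^ ((2 : ℝ) + 1 / a) * (T - t))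

/-- Third Cartesian component of the explicit axisymmetric Euler solution. -/
noncomputable def V3 (T a k t x1 x2 x3 : ℝ) : ℝ := -2 * a * x3 / (T - t)

open Real

theorem hasDerivAt_div_sub (c T t : ℝ) (h : T - t ≠ 0) :
    HasDerivAt (fun s => c / (T - s)) (c / (T - t) ^ 2) t := by
  simpa using (hasDerivAt_const t c).fun_div ((hasDerivAt_id' t).const_sub T) h

theorem hasDerivAt_sq_add_rpow (c p x : ℝ) (h : x ^ 2 + c ≠ 0) :
    HasDerivAt (fun s => (s ^ 2 + c) ^ p) (2 * p * x * (x ^ 2 + c) ^ p / (x ^ 2 + c)) x := by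
  convert ((hasDerivAt_pow 2 x).add_const c).rpow_const (p := p) (Or.inl h) using 1
  rw [rpow_sub_one h]; push_cast; ring

noncomputable def rpowNegAntideriv (β ρ : ℝ) : ℝ :=
  if β = 1 then log ρ else ρ ^ (1 - β) / (1 - β)

theorem hasDerivAt_rpowNegAntideriv (β : ℝ) {ρ : ℝ} (hρ : 0 < ρ) :
    HasDerivAt (rpowNegAntideriv β) (ρ ^ (-β)) ρ := by
  unfold rpowNegAntideriv
  by_cases hβ : β = 1
  · simp only [hβ, if_true, rpow_neg_one]
    exact hasDerivAt_log hρ.ne'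
  · have hβ' : 1 - β ≠ 0 := sub_ne_zero.mpr (Ne.symm hβ)
    simp only [hβ, if_false]
    refine ((hasDerivAt_rpow_const (Or.inl hρ.ne')).div_const (1 - β)).congr_deriv ?_
    rw [sub_sub_cancel_left]; field_simp

-- `r ^ (-(2 + 1/a))` as a function of `ρ = r²`.
noncomputable def swirlProfile (a ρ : ℝ) : ℝ := ρ ^ (-(2 + 1 / a) / 2)

theorem swirlProfile_sq (a : ℝ) {ρ : ℝ} (hρ : 0 ≤ ρ) :
    swirlProfile a ρ ^ 2 = ρ ^ (-(2 + 1 / a)) := by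
  rw [swirlProfile, ← rpow_natCast, ← rpow_mul hρ]; push_cast; ring_nf

theorem hasDerivAt_swirlProfile_sq_add (a c x : ℝ) (h : x ^ 2 + c ≠ 0) :
    HasDerivAt (fun s => swirlProfile a (s ^ 2 + c))
      (-(2 + 1 / a) * x * swirlProfile a (x ^ 2 + c) / (x ^ 2 + c)) x :=
  (hasDerivAt_sq_add_rpow c _ x h).congr_deriv (by rw [swirlProfile]; ring)

noncomputable def pressure (T a k t x1 x2 x3 : ℝ) : ℝ :=
  (-(a + a ^ 2) * (x1 ^ 2 + x2 ^ 2) / 2 + k ^ 2 / 2 * rpowNegAntideriv (2 + 1 / a) (x1 ^ 2 + x2 ^ 2)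
    + (a - 2 * a ^ 2) * x3 ^ 2) / (T - t) ^ 2

section EulerSolution

variable {T a k t x1 x2 x3 : ℝ}

theorem V1_eq :
    V1 T a k t x1 x2 x3 = (a * x1 + k * x2 * swirlProfile a (x1 ^ 2 + x2 ^ 2)) / (T - t) := by
  have hρ : 0 ≤ x1 ^ 2 + x2 ^ 2 := by positivity
  rw [V1, swirlProfile, sqrt_eq_rpow, ← rpow_mul hρ, neg_div, rpow_neg hρ, one_div_mul_eq_div]
  simp only [div_eq_mul_inv, mul_inv]
  ring

theorem V2_eq_V1 : V2 T a k t x1 x2 x3 = V1 T a (-k) t x2 x1 x3 := by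
  rw [V1, V2, add_comm (x2 ^ 2)]; ring

theorem V2_eq :
    V2 T a k t x1 x2 x3 = (a * x2 - k * x1 * swirlProfile a (x1 ^ 2 + x2 ^ 2)) / (T - t) := by
  rw [V2_eq_V1, V1_eq, add_comm (x2 ^ 2)]; ring

theorem pressure_swap : pressure T a k t x1 x2 x3 = pressure T a (-k) t x2 x1 x3 := by
  rw [pressure, pressure, neg_sq, add_comm (x2 ^ 2)]

theorem deriv_V1_time (ht : T - t ≠ 0) :
    deriv (fun s => V1 T a k s x1 x2 x3) t
      = (a * x1 + k * x2 * swirlProfile a (x1 ^ 2 + x2 ^ 2)) / (T - t) ^ 2 := by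
  simp only [V1_eq]
  exact (hasDerivAt_div_sub _ T t ht).deriv

theorem deriv_V1_x1 (hρ : x1 ^ 2 + x2 ^ 2 ≠ 0) :
    deriv (fun s => V1 T a k t s x2 x3) x1
      = (a - (2 + 1 / a) * k * x1 * x2 * swirlProfile a (x1 ^ 2 + x2 ^ 2) / (x1 ^ 2 + x2 ^ 2))
        / (T - t) := by
  simp only [V1_eq]
  exact ((((hasDerivAt_id' x1).const_mul a).add
    ((hasDerivAt_swirlProfile_sq_add a _ x1 hρ).const_mul (k * x2))).div_const (T - t)
    |>.congr_deriv (by ring)).deriv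

theorem deriv_V1_x2 (hρ : x1 ^ 2 + x2 ^ 2 ≠ 0) :
    deriv (fun s => V1 T a k t x1 s x3) x2
      = k * (swirlProfile a (x1 ^ 2 + x2 ^ 2)
          - (2 + 1 / a) * x2 ^ 2 * swirlProfile a (x1 ^ 2 + x2 ^ 2) / (x1 ^ 2 + x2 ^ 2)) / (T - t) := by
  rw [add_comm (x1 ^ 2)] at hρ ⊢
  simp only [V1_eq, add_comm (x1 ^ 2)]
  rw [((((hasDerivAt_id' x2).const_mul k).fun_mul (hasDerivAt_swirlProfile_sq_add a _ x2 hρ)).const_add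
    (a * x1) |>.div_const (T - t)).deriv]
  ring

theorem deriv_V1_x3 : deriv (fun s => V1 T a k t x1 x2 s) x3 = 0 :=
  deriv_const x3 (V1 T a k t x1 x2 0)

theorem deriv_V3_time (ht : T - t ≠ 0) :
    deriv (fun s => V3 T a k s x1 x2 x3) t = -2 * a * x3 / (T - t) ^ 2 :=
  (hasDerivAt_div_sub _ T t ht).deriv

theorem deriv_V3_x1 : deriv (fun s => V3 T a k t s x2 x3) x1 = 0 :=
  deriv_const x1 (V3 T a k t 0 x2 x3)

theorem deriv_V3_x2 : deriv (fun s => V3 T a k t x1 s x3) x2 = 0 :=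
  deriv_const x2 (V3 T a k t x1 0 x3)

theorem deriv_V3_x3 : deriv (fun s => V3 T a k t x1 x2 s) x3 = -2 * a / (T - t) :=
  (((hasDerivAt_id' x3).const_mul (-2 * a)).div_const (T - t) |>.congr_deriv (by ring)).deriv

theorem deriv_pressure_x1 (hρ : 0 < x1 ^ 2 + x2 ^ 2) :
    deriv (fun s => pressure T a k t s x2 x3) x1
      = (-(a + a ^ 2) * x1 + k ^ 2 * x1 * swirlProfile a (x1 ^ 2 + x2 ^ 2) ^ 2) / (T - t) ^ 2 := by
  have hq : HasDerivAt (fun s => s ^ 2 + x2 ^ 2) (2 * x1) x1 := by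
    simpa using (hasDerivAt_pow 2 x1).add_const (x2 ^ 2)
  have hΦ := (hasDerivAt_rpowNegAntideriv (2 + 1 / a) hρ).comp x1 hq
  rw [swirlProfile_sq a hρ.le]
  exact ((((hq.const_mul (-(a + a ^ 2))).div_const 2).add (hΦ.const_mul (k ^ 2 / 2))).add_const
    ((a - 2 * a ^ 2) * x3 ^ 2) |>.div_const ((T - t) ^ 2) |>.congr_deriv (by ring)).deriv

theorem deriv_pressure_x3 :
    deriv (fun s => pressure T a k t x1 x2 s) x3 = 2 * (a - 2 * a ^ 2) * x3 / (T - t) ^ 2 :=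
  (((hasDerivAt_pow 2 x3).const_mul (a - 2 * a ^ 2)).const_add _ |>.div_const ((T - t) ^ 2)
    |>.congr_deriv (by ring)).deriv

theorem euler_momentum_x1 (ha : a ≠ 0) (ht : T - t ≠ 0) (hρ : 0 < x1 ^ 2 + x2 ^ 2) :
    deriv (fun s => V1 T a k s x1 x2 x3) t
      + V1 T a k t x1 x2 x3 * deriv (fun s => V1 T a k t s x2 x3) x1
      + V2 T a k t x1 x2 x3 * deriv (fun s => V1 T a k t x1 s x3) x2
      + V3 T a k t x1 x2 x3 * deriv (fun s => V1 T a k t x1 x2 s) x3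
      = - deriv (fun s => pressure T a k t s x2 x3) x1 := by
  rw [deriv_V1_time ht, deriv_V1_x1 hρ.ne', deriv_V1_x2 hρ.ne', deriv_V1_x3, deriv_pressure_x1 hρ,
    V1_eq, V2_eq]
  have swirl_balance : a * (2 + 1 / a) = 2 * a + 1 := by field_simp
  generalize swirlProfile a (x1 ^ 2 + x2 ^ 2) = S
  generalize 2 + 1 / a = β at swirl_balance ⊢
  field_simp
  linear_combination -(k * x2 * S * (x1 ^ 2 + x2 ^ 2)) * swirl_balance

theorem euler_momentum_x2 (ha : a ≠ 0) (ht : T - t ≠ 0) (hρ : 0 < x1 ^ 2 + x2 ^ 2) :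
    deriv (fun s => V2 T a k s x1 x2 x3) t
      + V1 T a k t x1 x2 x3 * deriv (fun s => V2 T a k t s x2 x3) x1
      + V2 T a k t x1 x2 x3 * deriv (fun s => V2 T a k t x1 s x3) x2
      + V3 T a k t x1 x2 x3 * deriv (fun s => V2 T a k t x1 x2 s) x3
      = - deriv (fun s => pressure T a k t x1 s x3) x2 := by
  have h := euler_momentum_x1 (k := -k) (x1 := x2) (x2 := x1) (x3 := x3) ha ht (by rwa [add_comm])
  have hV3 : V3 T a (-k) t x2 x1 x3 = V3 T a k t x1 x2 x3 := rfl
  rw [V2_eq_V1, neg_neg, hV3] at h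
  simp only [V2_eq_V1, pressure_swap (k := k)]
  linarith

theorem euler_momentum_x3 (ht : T - t ≠ 0) :
    deriv (fun s => V3 T a k s x1 x2 x3) t
      + V1 T a k t x1 x2 x3 * deriv (fun s => V3 T a k t s x2 x3) x1
      + V2 T a k t x1 x2 x3 * deriv (fun s => V3 T a k t x1 s x3) x2
      + V3 T a k t x1 x2 x3 * deriv (fun s => V3 T a k t x1 x2 s) x3
      = - deriv (fun s => pressure T a k t x1 x2 s) x3 := by
  rw [deriv_V3_time ht, deriv_V3_x1, deriv_V3_x2, deriv_V3_x3, deriv_pressure_x3, V3]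
  field_simp
  ring

end EulerSolution

theorem stmt1_general (T a k : ℝ) (ha : a ≠ 0) :
    ∃ P : ℝ → ℝ → ℝ → ℝ → ℝ,
      ∀ t x1 x2 x3 : ℝ, 0 ≤ t → t < T → 0 < Real.sqrt (x1 ^ 2 + x2 ^ 2) →
        (deriv (fun s => V1 T a k s x1 x2 x3) t
          + V1 T a k t x1 x2 x3 * deriv (fun s => V1 T a k t s x2 x3) x1
          + V2 T a k t x1 x2 x3 * deriv (fun s => V1 T a k t x1 s x3) x2
          + V3 T a k t x1 x2 x3 * deriv (fun s => V1 T a k t x1 x2 s) x3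
          = - deriv (fun s => P t s x2 x3) x1) ∧
        (deriv (fun s => V2 T a k s x1 x2 x3) t
          + V1 T a k t x1 x2 x3 * deriv (fun s => V2 T a k t s x2 x3) x1
          + V2 T a k t x1 x2 x3 * deriv (fun s => V2 T a k t x1 s x3) x2
          + V3 T a k t x1 x2 x3 * deriv (fun s => V2 T a k t x1 x2 s) x3
          = - deriv (fun s => P t x1 s x3) x2) ∧
        (deriv (fun s => V3 T a k s x1 x2 x3) t
          + V1 T a k t x1 x2 x3 * deriv (fun s => V3 T a k t s x2 x3) x1
          + V2 T a k t x1 x2 x3 * deriv (fun s => V3 T a k t x1 s x3) x2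
          + V3 T a k t x1 x2 x3 * deriv (fun s => V3 T a k t x1 x2 s) x3
          = - deriv (fun s => P t x1 x2 s) x3) := by
  refine ⟨pressure T a k, fun t x1 x2 x3 _ htT hr => ?_⟩
  have ht : T - t ≠ 0 := (sub_pos.mpr htT).ne'
  have hρ : 0 < x1 ^ 2 + x2 ^ 2 := Real.sqrt_pos.mp hr
  exact ⟨euler_momentum_x1 ha ht hρ, euler_momentum_x2 ha ht hρ, euler_momentum_x3 ht⟩

/-- There exists a pressure `P` such that the explicit velocity field satisfies
the Euler momentum equation `∂ₜv + (v·∇)v = -∇P` pointwise for `r > 0`, `0 ≤ t < T*`. -/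
theorem stmt1 (T a k : ℝ) (hT : 0 < T) (ha : a ≠ 0) :
    ∃ P : ℝ → ℝ → ℝ → ℝ → ℝ,
      ∀ t x1 x2 x3 : ℝ, 0 ≤ t → t < T → 0 < Real.sqrt (x1 ^ 2 + x2 ^ 2) →
        (deriv (fun s => V1 T a k s x1 x2 x3) t
          + V1 T a k t x1 x2 x3 * deriv (fun s => V1 T a k t s x2 x3) x1
          + V2 T a k t x1 x2 x3 * deriv (fun s => V1 T a k t x1 s x3) x2
          + V3 T a k t x1 x2 x3 * deriv (fun s => V1 T a k t x1 x2 s) x3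
          = - deriv (fun s => P t s x2 x3) x1) ∧
        (deriv (fun s => V2 T a k s x1 x2 x3) t
          + V1 T a k t x1 x2 x3 * deriv (fun s => V2 T a k t s x2 x3) x1
          + V2 T a k t x1 x2 x3 * deriv (fun s => V2 T a k t x1 s x3) x2
          + V3 T a k t x1 x2 x3 * deriv (fun s => V2 T a k t x1 x2 s) x3
          = - deriv (fun s => P t x1 s x3) x2) ∧
        (deriv (fun s => V3 T a k s x1 x2 x3) t
          + V1 T a k t x1 x2 x3 * deriv (fun s => V3 T a k t s x2 x3) x1
          + V2 T a k t x1 x2 x3 * deriv (fun s => V3 T a k t x1 s x3) x2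
          + V3 T a k t x1 x2 x3 * deriv (fun s => V3 T a k t x1 x2 s) x3
          = - deriv (fun s => P t x1 x2 s) x3) :=
  stmt1_general T a k ha
end

section
/- Define the axisymmetric fields v^r(t,r,z) = a r/(T*-t), v^θ(t,r,z) = k r^{-(1+1/a)}/(T*-t), v^z(t,r,z) = -2a z/(T*-t) for T* > 0, a ≠ 0, k ∈ ℝ, r > 0, t ∈ [0,T*). Then the angular momentum equation ∂ₜv^θ + v^r ∂ᵣv^θ + v^z ∂_z v^θ = -(v^r v^θ)/r holds pointwise. -/
/-! With `p = -(1 + 1/a)` the swirl is `v = k r^p / (T - t)`. Then `∂ₜv = v / (T - t)`, and since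
`r^p` is homogeneous of degree `p`, `v^r ∂ᵣv = a p v / (T - t)`; `v` does not depend on `z`. The
equation therefore reduces to `1 + a p = -a`, which is exactly the choice of `p`. -/

theorem hasDerivAt_div_const_sub (c T t : ℝ) (h : T - t ≠ 0) :
    HasDerivAt (fun s : ℝ => c / (T - s)) (c / (T - t) ^ 2) t := by
  have hsub : HasDerivAt (fun s : ℝ => T - s) (-1) t := by
    simpa using (hasDerivAt_id t).const_sub T
  simpa [div_eq_mul_inv] using (hsub.inv h).const_mul c

theorem mul_deriv_const_mul_rpow_div (k p D : ℝ) {r : ℝ} (hr : 0 < r) :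
    r * deriv (fun s : ℝ => k * s ^ p / D) r = p * (k * r ^ p / D) := by
  have hrpow := ((Real.hasDerivAt_rpow_const (p := p) (Or.inl hr.ne')).const_mul k).div_const D
  rw [hrpow.deriv, Real.rpow_sub_one hr.ne']
  field_simp

theorem stmt2_general (T a k : ℝ) (ha : a ≠ 0)
    (t r z : ℝ) (htT : t < T) (hr : 0 < r) :
    deriv (fun s : ℝ => k * r ^ (-(1 + 1 / a)) / (T - s)) t
      + (a * r / (T - t)) * deriv (fun s : ℝ => k * s ^ (-(1 + 1 / a)) / (T - t)) r
      + (-2 * a * z / (T - t)) * deriv (fun _ : ℝ => k * r ^ (-(1 + 1 / a)) / (T - t)) z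
      = -((a * r / (T - t)) * (k * r ^ (-(1 + 1 / a)) / (T - t))) / r := by
  have hTt : T - t ≠ 0 := sub_ne_zero.mpr htT.ne'
  set p := -(1 + 1 / a) with hp
  have hexp : 1 + a * p = -a := by
    rw [hp]
    field_simp
    ring
  have hradial := mul_deriv_const_mul_rpow_div k p (T - t) hr
  set d := deriv (fun s : ℝ => k * s ^ p / (T - t)) r
  rw [(hasDerivAt_div_const_sub _ T t hTt).deriv, deriv_const, mul_zero, add_zero]
  field_simp at hradial ⊢
  linear_combination a * hradial + k * r ^ p * hexp

/-- The angular momentum (swirl) equation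
`∂ₜv^θ + v^r ∂ᵣ v^θ + v^z ∂_z v^θ = -(v^r v^θ)/r`
holds pointwise for the explicit axisymmetric fields
`v^r = a r/(T-t)`, `v^θ = k r^{-(1+1/a)}/(T-t)`, `v^z = -2a z/(T-t)`. -/
theorem stmt2 (T a k : ℝ) (hT : 0 < T) (ha : a ≠ 0)
    (t r z : ℝ) (ht0 : 0 ≤ t) (htT : t < T) (hr : 0 < r) :
    deriv (fun s : ℝ => k * r ^ (-(1 + 1 / a)) / (T - s)) t
      + (a * r / (T - t)) * deriv (fun s : ℝ => k * s ^ (-(1 + 1 / a)) / (T - t)) r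
      + (-2 * a * z / (T - t)) * deriv (fun _ : ℝ => k * r ^ (-(1 + 1 / a)) / (T - t)) z
      = -((a * r / (T - t)) * (k * r ^ (-(1 + 1 / a)) / (T - t))) / r :=
  stmt2_general T a k ha t r z htT hr
end

section
/- Let a ≠ 0 and v^θ(t,r,z) = k z^{p₁} r^{q₁}/(T*-t) with k ≠ 0, and let v^r = a r/(T*-t), v^z = -2a z/(T*-t). If v^θ satisfies ∂ₜv^θ + v^r ∂ᵣv^θ + v^z ∂_z v^θ = -(v^r v^θ)/r and ∂_z v^θ = 0 pointwise on {r > 0, z > 0, 0 ≤ t < T*}, then p₁ = 0 and q₁ = -(1 + 1/a). -/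
/-!
Since `∂_z v^θ = k p₁ z^{p₁-1} r^{q₁}/(T-t)` vanishes and `k ≠ 0`, `p₁ = 0`. The swirl equation
evaluated at `(t, r, z) = (0, 1, 1)` then reads `k (1 + a q₁ + a) / T² = 0`, which determines `q₁`.
-/

theorem deriv_const_div_sub (c T t : ℝ) (h : t ≠ T) :
    deriv (fun s : ℝ => c / (T - s)) t = c / (T - t) ^ 2 := by
  rw [deriv_const_div (d := fun s => T - s) c (by fun_prop) (sub_ne_zero.2 h.symm)]
  simp

/-- If `v^θ = k z^{p₁} r^{q₁}/(T-t)` (with `k ≠ 0`) satisfies the swirl equation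
with `v^r = ar/(T-t)`, `v^z = -2az/(T-t)`, and `∂_z v^θ = 0` pointwise on
`{r > 0, z > 0, 0 ≤ t < T}`, then `p₁ = 0` and `q₁ = -(1 + 1/a)`. -/
theorem stmt5 (T a k p₁ q₁ : ℝ) (hT : 0 < T) (ha : a ≠ 0) (hk : k ≠ 0)
    (hswirl : ∀ t r z : ℝ, 0 ≤ t → t < T → 0 < r → 0 < z →
      deriv (fun s : ℝ => k * z ^ p₁ * r ^ q₁ / (T - s)) t
        + (a * r / (T - t)) * deriv (fun s : ℝ => k * z ^ p₁ * s ^ q₁ / (T - t)) r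
        + (-2 * a * z / (T - t)) * deriv (fun s : ℝ => k * s ^ p₁ * r ^ q₁ / (T - t)) z
        = -((a * r / (T - t)) * (k * z ^ p₁ * r ^ q₁ / (T - t))) / r)
    (hz : ∀ t r z : ℝ, 0 ≤ t → t < T → 0 < r → 0 < z →
      deriv (fun s : ℝ => k * s ^ p₁ * r ^ q₁ / (T - t)) z = 0) :
    p₁ = 0 ∧ q₁ = -(1 + 1 / a) := by
  have hz₁ := hz 0 1 1 le_rfl hT one_pos one_pos
  have hp : p₁ = 0 := by simpa [deriv_div_const, hk, hT.ne'] using hz₁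
  have hr : deriv (fun s : ℝ => k * 1 ^ p₁ * s ^ q₁ / (T - 0)) 1 = k * q₁ / T := by
    simp [deriv_div_const]
  have hs := hswirl 0 1 1 le_rfl hT one_pos one_pos
  rw [deriv_const_div_sub _ _ _ hT.ne, hr, hz₁] at hs
  simp only [Real.one_rpow, sub_zero, mul_one, mul_zero, add_zero] at hs
  refine ⟨hp, ?_⟩
  field_simp at hs ⊢
  linear_combination hs
end
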